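/- Let r be a positive integer, let G be a finite simple graph with at least two vertices, and let s be any vertex of G. Then rk_r(G) ≤ rk_r(G − s) + 1. -/

import Mathlib

open Classical

/-- The closed `r`-neighborhood of `c` inside the induced subgraph `G[A]`:
all vertices of `A` joined to `c` by a walk of length at most `r` staying in `A`. -/
noncomputable def ball {V : Type*} (G : SimpleGraph V) (r : ℕ) (A : Finset V) (c : V) :
    Finset V :=
  A.filter (fun v => ∃ p : G.Walk c v, p.length ≤ r ∧ ∀ x ∈ p.support, x ∈ A)

/-- The `r`-splitter rank of the induced subgraph `G[A]` (with `rank ∅ = 0`). -/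
noncomputable def splitterRank {V : Type*} [DecidableEq V] (G : SimpleGraph V) (r : ℕ)
    (A : Finset V) : ℕ :=
  if _ : A.Nonempty then
    1 + A.attach.sup (fun c =>
      (ball G r A c.1).attach.inf'
        (Finset.attach_nonempty_iff.2 ⟨c.1, Finset.mem_filter.2 ⟨c.2,
          SimpleGraph.Walk.nil, by simp, by simp [c.2]⟩⟩)
        (fun s => splitterRank G r ((ball G r A c.1).erase s.1)))
  else 0
termination_by A.card
decreasing_by
  exact lt_of_lt_of_le (Finset.card_erase_lt_of_mem s.2)
    (Finset.card_le_card (Finset.filter_subset _ _))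

/-! Splitter answers a move `c` of the connector by deleting `s` when `s` lies in the
`r`-ball of `c`, and `c` itself otherwise; either way the remaining arena is an induced
subgraph of `G - s`, and the splitter rank is monotone under induced subgraphs. Monotonicity
itself is the same strategy-copying argument, by induction on the size of the larger set. -/

theorem Finset.exists_mem_erase_subset_erase {α : Type*} [DecidableEq α] {X Y : Finset α}
    {c : α} (hXY : X ⊆ Y) (hc : c ∈ X) (s : α) : ∃ t ∈ X, X.erase t ⊆ Y.erase s := by
  by_cases hs : s ∈ X
  · exact ⟨s, hs, Finset.erase_subset_erase s hXY⟩
  · refine ⟨c, hc, fun x hx => Finset.mem_erase.2 ⟨?_, hXY (Finset.mem_of_mem_erase hx)⟩⟩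
    rintro rfl
    exact hs (Finset.mem_of_mem_erase hx)

section

variable {V : Type*} (G : SimpleGraph V) (r : ℕ)

theorem ball_subset (A : Finset V) (c : V) : ball G r A c ⊆ A :=
  Finset.filter_subset _ _

theorem mem_ball_self {A : Finset V} {c : V} (hc : c ∈ A) : c ∈ ball G r A c :=
  Finset.mem_filter.2 ⟨hc, SimpleGraph.Walk.nil, by simp, by simp [hc]⟩

theorem ball_mono {A B : Finset V} (h : A ⊆ B) (c : V) : ball G r A c ⊆ ball G r B c := by
  intro v hv
  obtain ⟨hvA, p, hp, hsupp⟩ := Finset.mem_filter.1 hv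
  exact Finset.mem_filter.2 ⟨h hvA, p, hp, fun x hx => h (hsupp x hx)⟩

variable [DecidableEq V]

theorem splitterRank_le_add_one {A : Finset V} {n : ℕ}
    (h : ∀ c ∈ A, ∃ t ∈ ball G r A c, splitterRank G r ((ball G r A c).erase t) ≤ n) :
    splitterRank G r A ≤ n + 1 := by
  rw [splitterRank]
  split_ifs
  · rw [add_comm]
    refine Nat.add_le_add_right (Finset.sup_le fun c _ => ?_) 1
    obtain ⟨t, ht, hle⟩ := h c.1 c.2
    exact Finset.inf'_le_of_le _ (Finset.mem_attach _ ⟨t, ht⟩) hle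
  · exact Nat.zero_le _

theorem splitterRank_le_of_forall_exists {A B : Finset V}
    (h : ∀ c ∈ A, ∃ c' ∈ B, ∀ t' ∈ ball G r B c', ∃ t ∈ ball G r A c,
      splitterRank G r ((ball G r A c).erase t) ≤ splitterRank G r ((ball G r B c').erase t')) :
    splitterRank G r A ≤ splitterRank G r B := by
  by_cases hA : A.Nonempty
  · obtain ⟨c', hc', -⟩ := h _ hA.choose_spec
    rw [splitterRank, dif_pos hA, splitterRank, dif_pos ⟨c', hc'⟩]
    refine Nat.add_le_add_left (Finset.sup_le fun c _ => ?_) 1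
    obtain ⟨c', hc', hmove⟩ := h c.1 c.2
    refine Finset.le_sup_of_le (Finset.mem_attach _ ⟨c', hc'⟩) (Finset.le_inf' _ _ fun t' _ => ?_)
    obtain ⟨t, ht, hle⟩ := hmove t'.1 t'.2
    exact Finset.inf'_le_of_le _ (Finset.mem_attach _ ⟨t, ht⟩) hle
  · rw [splitterRank, dif_neg hA]
    exact Nat.zero_le _

theorem splitterRank_mono {A B : Finset V} (hAB : A ⊆ B) :
    splitterRank G r A ≤ splitterRank G r B := by
  refine splitterRank_le_of_forall_exists G r fun c hc => ⟨c, hAB hc, fun t' ht' => ?_⟩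
  obtain ⟨t, ht, hsub⟩ :=
    Finset.exists_mem_erase_subset_erase (ball_mono G r hAB c) (mem_ball_self G r hc) t'
  have hcard : ((ball G r B c).erase t').card < B.card :=
    (Finset.card_erase_lt_of_mem ht').trans_le (Finset.card_le_card (ball_subset G r B c))
  exact ⟨t, ht, splitterRank_mono hsub⟩
termination_by B.card

theorem splitterRank_le_splitterRank_erase_add_one (A : Finset V) (s : V) :
    splitterRank G r A ≤ splitterRank G r (A.erase s) + 1 :=
  splitterRank_le_add_one G r fun c hc =>
    have ⟨t, ht, hsub⟩ :=
      Finset.exists_mem_erase_subset_erase (ball_subset G r A c) (mem_ball_self G r hc) s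
    ⟨t, ht, splitterRank_mono G r hsub⟩

end

theorem rank_le_rank_erase_add_one_general {V : Type*} [Fintype V] [DecidableEq V]
    (G : SimpleGraph V) (r : ℕ) (s : V) :
    splitterRank G r Finset.univ ≤ splitterRank G r (Finset.univ.erase s) + 1 :=
  splitterRank_le_splitterRank_erase_add_one G r Finset.univ s

/-- For a graph with at least two vertices, `rk_r(G) ≤ rk_r(G - s) + 1`. -/
theorem rank_le_rank_erase_add_one {V : Type*} [Fintype V] [DecidableEq V]
    (G : SimpleGraph V) (r : ℕ) (hr : 0 < r) (h2 : 2 ≤ Fintype.card V) (s : V) :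
    splitterRank G r Finset.univ ≤ splitterRank G r (Finset.univ.erase s) + 1 :=
  rank_le_rank_erase_add_one_general G r s
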